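/- Let k ≥ 2, and for x ∈ Δ_k set z(x) = x_{k+1} − Σ_{i=2}^k x_i. If x ∈ Δ_k satisfies x_1 = max_{1≤j≤k} x_j, then z(F(x)) = z(x)² + 2 Σ_{i=2}^k (x_1 − x_i) x_i, and in particular z(F(x)) ≥ z(x)². -/

import Mathlib

/-!
Write L = x_{k+1}, S = Σ_{i=2}^k x_i and Q = Σ_{i=2}^k x_i². The pair sum in F_{k+1} is half of
(x_1 + S)² − (x_1² + Q), and Σ_{i=2}^k F_i = Q + 2LS, so
z(F(x)) = L² + 2x_1S + S² − 2Q − 2LS = (L − S)² + 2(x_1S − Q).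
The correction x_1S − Q = Σ_{i=2}^k (x_1 − x_i) x_i is nonnegative because x_1 is maximal.
-/

/-- The map F on ℝ^{k+1} (coordinates indexed 0,…,k; the last coordinate is the
"empty" state).  For i < k, F_i(x) = x_i² + 2 x_i x_k; the last coordinate is
F_k(x) = x_k² + 2 Σ_{a<b<k} x_a x_b. -/
noncomputable def Fmap (k : ℕ) (x : Fin (k + 1) → ℝ) : Fin (k + 1) → ℝ :=
  fun i =>
    if i.val < k then x i ^ 2 + 2 * x i * x (Fin.last k)
    else x (Fin.last k) ^ 2 +
      2 * ∑ a : Fin (k + 1), ∑ b : Fin (k + 1),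
        (if a.val < b.val ∧ b.val < k then x a * x b else 0)

/-- The open simplex Δ_k ⊆ ℝ^{k+1}. -/
def simplex (k : ℕ) : Set (Fin (k + 1) → ℝ) :=
  {p | (∑ i, p i) = 1 ∧ ∀ i, 0 < p i}

/-- z(x) = x_{k+1} − Σ_{i=2}^k x_i (0-indexed: last coordinate minus the sum
of coordinates 1,…,k−1). -/
noncomputable def zfun (k : ℕ) (x : Fin (k + 1) → ℝ) : ℝ :=
  x (Fin.last k) - ∑ j : Fin (k + 1), if 1 ≤ j.val ∧ j.val < k then x j else 0

theorem Finset.sq_sum_eq_sum_sq_add_two_mul_sum_lt {ι R : Type*} [LinearOrder ι] [CommSemiring R]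
    (s : Finset ι) (f : ι → R) :
    (∑ i ∈ s, f i) ^ 2
      = ∑ i ∈ s, f i ^ 2 + 2 * ∑ i ∈ s, ∑ j ∈ s, if i < j then f i * f j else 0 := by
  induction s using Finset.induction_on_max with
  | empty => simp
  | insert a s ha ih =>
    have ha' : a ∉ s := fun h => lt_irrefl a (ha a h)
    have hnot : ∀ j ∈ s, ¬ a < j := fun j hj => not_lt.2 (ha j hj).le
    simp only [Finset.sum_insert ha', lt_irrefl, if_false, Finset.sum_ite_of_false hnot,
      Finset.sum_const_zero, zero_add, Finset.sum_ite_of_true ha, Finset.sum_add_distrib,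
      ← Finset.sum_mul]
    rw [add_sq, ih]; ring

open Finset

section

variable {k : ℕ} (x : Fin (k + 1) → ℝ)

lemma zfun_eq : zfun k x = x (Fin.last k) - ∑ j with 1 ≤ j.val ∧ j.val < k, x j := by
  rw [zfun, sum_filter]

lemma Fmap_of_lt {i : Fin (k + 1)} (hi : i.val < k) :
    Fmap k x i = x i ^ 2 + 2 * x i * x (Fin.last k) :=
  if_pos hi

lemma Fmap_last :
    Fmap k x (Fin.last k)
      = x (Fin.last k) ^ 2 + (∑ j with j.val < k, x j) ^ 2 - ∑ j with j.val < k, x j ^ 2 := by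
  have hpairs : ∑ a : Fin (k + 1), ∑ b : Fin (k + 1),
        (if a.val < b.val ∧ b.val < k then x a * x b else 0)
      = ∑ a with a.val < k, ∑ b with b.val < k, if a < b then x a * x b else 0 := by
    rw [sum_filter]
    refine sum_congr rfl fun a _ => ?_
    rw [sum_filter]
    split_ifs with ha
    · refine sum_congr rfl fun b _ => ?_
      by_cases hb : b.val < k <;> simp [hb]
    · refine sum_eq_zero fun b _ => if_neg ?_
      omega
  rw [Fmap, if_neg (by simp), hpairs, sq_sum_eq_sum_sq_add_two_mul_sum_lt]
  ring

lemma sum_filter_lt_eq_add {M : Type*} [AddCommMonoid M] (hk : 0 < k) (f : Fin (k + 1) → M) :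
    ∑ j with j.val < k, f j = f 0 + ∑ j with 1 ≤ j.val ∧ j.val < k, f j := by
  have hsplit : univ.filter (fun j : Fin (k + 1) => j.val < k)
      = insert 0 (univ.filter fun j : Fin (k + 1) => 1 ≤ j.val ∧ j.val < k) := by
    ext j
    simp only [mem_filter, mem_univ, true_and, mem_insert, Fin.ext_iff, Fin.val_zero]
    omega
  rw [hsplit, sum_insert (by simp)]

lemma sum_Fmap_of_forall_lt {s : Finset (Fin (k + 1))} (hs : ∀ j ∈ s, j.val < k) :
    ∑ j ∈ s, Fmap k x j = ∑ j ∈ s, x j ^ 2 + 2 * x (Fin.last k) * ∑ j ∈ s, x j := by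
  rw [mul_sum, ← sum_add_distrib]
  refine sum_congr rfl fun j hj => ?_
  rw [Fmap_of_lt x (hs j hj)]
  ring

end

/-- If x ∈ Δ_k with x_1 = max_{1≤j≤k} x_j, then
z(F(x)) = z(x)² + 2 Σ_{i=2}^k (x_1 − x_i) x_i; in particular z(F(x)) ≥ z(x)². -/
theorem zfun_recursion (k : ℕ) (hk : 2 ≤ k) (x : Fin (k + 1) → ℝ)
    (hx : x ∈ simplex k)
    (hmax : ∀ j : Fin (k + 1), j.val < k → x j ≤ x 0) :
    zfun k (Fmap k x)
      = zfun k x ^ 2 + 2 * ∑ j : Fin (k + 1),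
          (if 1 ≤ j.val ∧ j.val < k then (x 0 - x j) * x j else 0) ∧
    zfun k x ^ 2 ≤ zfun k (Fmap k x) := by
  have hrec : zfun k (Fmap k x)
      = zfun k x ^ 2 + 2 * ∑ j : Fin (k + 1),
          (if 1 ≤ j.val ∧ j.val < k then (x 0 - x j) * x j else 0) := by
    rw [← sum_filter, zfun_eq, zfun_eq, Fmap_last,
      sum_Fmap_of_forall_lt x fun j hj => (mem_filter.1 hj).2.2,
      sum_filter_lt_eq_add (by omega) x, sum_filter_lt_eq_add (by omega) (fun j => x j ^ 2)]
    simp only [sub_mul, sum_sub_distrib, ← mul_sum, ← sq]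
    ring
  have hgain : 0 ≤ ∑ j : Fin (k + 1), (if 1 ≤ j.val ∧ j.val < k then (x 0 - x j) * x j else 0) :=
    sum_nonneg fun j _ => by
      split_ifs with hj
      · exact mul_nonneg (sub_nonneg.2 (hmax j hj.2)) (hx.2 j).le
      · exact le_rfl
  exact ⟨hrec, by linarith⟩
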